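/- In the nonlinear-target setting, there exist scalars c₁, c₂ ∈ ℝ such that E[Xᵀ y⃗ y⃗ᵀ X] = c₁ I_d and E[Xᵀ y⃗ ūᵀ] = c₂ I_d, the expectations being over the context (x₁, y₁, …, xₙ, yₙ). -/

import Mathlib

open MeasureTheory ProbabilityTheory Matrix

noncomputable section

/-- Vectors in `ℝ^d`. -/
abbrev Vec (d : ℕ) : Type := Fin d → ℝ

/-- The standard Gaussian measure `N(0, I_d)` on `ℝ^d`. -/
def stdGaussian (d : ℕ) : Measure (Vec d) :=
  Measure.pi fun _ : Fin d => gaussianReal 0 1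

instance (d : ℕ) : IsProbabilityMeasure (stdGaussian d) := by
  unfold _root_.stdGaussian; infer_instance

/-- Sample space in the nonlinear-target setting: the covariates `x₁, …, x_{n+1}`, the
random parameter `θ` of the random target function `f = F θ`, and the noises
`ε₁, …, ε_{n+1}`. -/
abbrev OmegaNL (d n : ℕ) (Θ : Type) : Type := (Fin (n+1) → Vec d) × Θ × (Fin (n+1) → ℝ)

/-- Joint law in the nonlinear-target setting: `xᵢ` i.i.d. `N(0, I_d)`, `θ ~ ν`
(the law of the random target function), and `εᵢ` i.i.d. `N(0, σ²)`, all independent. -/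
def μNL (d n : ℕ) (σ : ℝ) (Θ : Type) [MeasurableSpace Θ] (ν : Measure Θ) :
    Measure (OmegaNL d n Θ) :=
  (Measure.pi fun _ : Fin (n+1) => stdGaussian d).prod
    (ν.prod (Measure.pi fun _ : Fin (n+1) => gaussianReal 0 ⟨σ^2, sq_nonneg σ⟩))

/-- The covariate `xᵢ`. -/
def xv {d n : ℕ} {Θ : Type} (i : Fin (n+1)) (ω : OmegaNL d n Θ) : Vec d := ω.1 i

/-- The response `yᵢ = f(xᵢ) + εᵢ`, where `f = F θ` is the random target function. -/
def yv {d n : ℕ} {Θ : Type} (F : Θ → Vec d → ℝ) (i : Fin (n+1)) (ω : OmegaNL d n Θ) : ℝ :=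
  F ω.2.1 (ω.1 i) + ω.2.2 i

/-- The design matrix `X ∈ ℝ^{n×d}` whose `i`-th row is `xᵢᵀ` (context covariates only). -/
def Xmat {d n : ℕ} {Θ : Type} (ω : OmegaNL d n Θ) : Matrix (Fin n) (Fin d) ℝ :=
  Matrix.of fun i j => xv i.castSucc ω j

/-- The response vector `y⃗ = (y₁, …, yₙ)`. -/
def Yvec {d n : ℕ} {Θ : Type} (F : Θ → Vec d → ℝ) (ω : OmegaNL d n Θ) : Fin n → ℝ :=
  fun i => yv F i.castSucc ω

/-- The vector `Xᵀy⃗ ∈ ℝ^d`. -/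
def XtY {d n : ℕ} {Θ : Type} (F : Θ → Vec d → ℝ) (ω : OmegaNL d n Θ) : Vec d :=
  (Xmat ω)ᵀ.mulVec (Yvec F ω)

/-- The token `vᵢ = (xᵢ, yᵢ) ∈ ℝ^{d+1}`. -/
def tok {d n : ℕ} {Θ : Type} (F : Θ → Vec d → ℝ) (i : Fin (n+1)) (ω : OmegaNL d n Θ) :
    Vec (d+1) :=
  Fin.snoc (xv i ω) (yv F i ω)

/-- The query token `v_{n+1} = (x_{n+1}, 0) ∈ ℝ^{d+1}`. -/
def query {d n : ℕ} {Θ : Type} (ω : OmegaNL d n Θ) : Vec (d+1) :=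
  Fin.snoc (xv (Fin.last n) ω) 0

/-- `G = Σ_{i=1}^n vᵢvᵢᵀ ∈ ℝ^{(d+1)×(d+1)}`. -/
def Gmat {d n : ℕ} {Θ : Type} (F : Θ → Vec d → ℝ) (ω : OmegaNL d n Θ) :
    Matrix (Fin (d+1)) (Fin (d+1)) ℝ :=
  ∑ i : Fin n, vecMulVec (tok F i.castSucc ω) (tok F i.castSucc ω)

/-- The σ-algebra generated by the context `D̃ = (x₁, y₁, …, xₙ, yₙ)`. -/
def ctxAlg (d n : ℕ) (Θ : Type) [MeasurableSpace Θ] (F : Θ → Vec d → ℝ) :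
    MeasurableSpace (OmegaNL d n Θ) :=
  MeasurableSpace.comap
    (fun ω => ((fun i : Fin n => xv i.castSucc ω, fun i : Fin n => yv F i.castSucc ω) :
      (Fin n → Vec d) × (Fin n → ℝ))) inferInstance

/-- `ū = E[y_{n+1} x_{n+1} | D̃] ∈ ℝ^d`, the conditional expectation (coordinatewise)
of `y_{n+1} x_{n+1}` given the context; it is the minimizer over `u` of
`E[(u·x_{n+1} − y_{n+1})² | D̃]`. -/
def ubar (d n : ℕ) (σ : ℝ) (Θ : Type) [MeasurableSpace Θ] (ν : Measure Θ)
    (F : Θ → Vec d → ℝ) (ω : OmegaNL d n Θ) : Vec d :=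
  fun j => condExp (ctxAlg d n Θ F) (μNL d n σ Θ ν)
    (fun ω' => yv F (Fin.last n) ω' * xv (Fin.last n) ω' j) ω

/-- Rotational invariance of the law of the random target function: for every orthogonal
`R` and finitely many points `z₁, …, z_m`, the joint law of `(f(Rz₁), …, f(Rz_m))`
equals that of `(f(z₁), …, f(z_m))`. -/
def RotInvariant {Θ : Type} [MeasurableSpace Θ] (d : ℕ) (ν : Measure Θ)
    (F : Θ → Vec d → ℝ) : Prop :=
  ∀ (m : ℕ) (R : Matrix (Fin d) (Fin d) ℝ), Rᵀ * R = 1 → ∀ z : Fin m → Vec d,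
    Measure.map (fun θ => fun j : Fin m => F θ (R.mulVec (z j))) ν
      = Measure.map (fun θ => fun j : Fin m => F θ (z j)) ν

/-- Sign symmetry of the law of the random target function: `(−f(z₁), …, −f(z_m))` has
the same joint law as `(f(z₁), …, f(z_m))`. -/
def SignSymmetric {Θ : Type} [MeasurableSpace Θ] (d : ℕ) (ν : Measure Θ)
    (F : Θ → Vec d → ℝ) : Prop :=
  ∀ (m : ℕ) (z : Fin m → Vec d),
    Measure.map (fun θ => fun j : Fin m => -F θ (z j)) ν
      = Measure.map (fun θ => fun j : Fin m => F θ (z j)) ν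

/-- Integrability: all joint moments of `(f(x₁), …, f(x_{n+1}))` of total order at most 4
are finite. -/
def MomentsFinite (d n : ℕ) (σ : ℝ) (Θ : Type) [MeasurableSpace Θ] (ν : Measure Θ)
    (F : Θ → Vec d → ℝ) : Prop :=
  ∀ α : Fin (n+1) → ℕ, (∑ i, α i) ≤ 4 →
    Integrable (fun ω : OmegaNL d n Θ => ∏ i, (F ω.2.1 (ω.1 i)) ^ (α i)) (μNL d n σ Θ ν)

/-- The learning rate `η_f = E[ūᵀXᵀy⃗] / E[y⃗ᵀXXᵀy⃗]` in the nonlinear-target setting. -/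
def etaNL (d n : ℕ) (σ : ℝ) (Θ : Type) [MeasurableSpace Θ] (ν : Measure Θ)
    (F : Θ → Vec d → ℝ) : ℝ :=
  (∫ ω, ubar d n σ Θ ν F ω ⬝ᵥ XtY F ω ∂ (μNL d n σ Θ ν)) /
  (∫ ω, Yvec F ω ⬝ᵥ ((Xmat ω * (Xmat ω)ᵀ).mulVec (Yvec F ω)) ∂ (μNL d n σ Θ ν))

instance gaussianReal_mk_isProb (m r : ℝ) (h : 0 ≤ r) : IsProbabilityMeasure (gaussianReal m ⟨r, h⟩) :=
  instIsProbabilityMeasureGaussianReal m (NNReal.mk r h)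

open scoped NNReal ENNReal Real
open Real

lemma pi_map_eval {ι : Type*} [Fintype ι] [DecidableEq ι] {α : ι → Type*}
    [∀ i, MeasurableSpace (α i)] (μ : ∀ i, Measure (α i)) [∀ i, IsProbabilityMeasure (μ i)]
    (k : ι) : Measure.map (fun x => x k) (Measure.pi μ) = μ k := by
  ext s hs
  rw [Measure.map_apply (measurable_pi_apply k) hs]
  have hpre : (fun x : ∀ i, α i => x k) ⁻¹' s
      = Set.pi Set.univ (Function.update (fun i => (Set.univ : Set (α i))) k s) := by
    ext x
    simp only [Set.mem_preimage, Set.mem_univ_pi]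
    constructor
    · intro h i
      rcases eq_or_ne i k with rfl | hik
      · simpa using h
      · rw [Function.update_of_ne hik]; trivial
    · intro h; have := h k; simpa using this
  rw [hpre, Measure.pi_pi]
  rw [Finset.prod_eq_single k]
  · simp
  · intro b _ hb; rw [Function.update_of_ne hb]; simp
  · simp

lemma integrable_pow4_gaussianReal (v : ℝ≥0) :
    Integrable (fun x : ℝ => x ^ 4) (gaussianReal 0 v) := by
  by_cases hv : v = 0
  · subst hv
    rw [gaussianReal_zero_var]
    exact (integrable_const ((0:ℝ) ^ 4)).congr (ae_eq_dirac (fun x : ℝ => x ^ 4)).symm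
  rw [gaussianReal_of_var_ne_zero _ hv,
    integrable_withDensity_iff (measurable_gaussianPDF _ _)
      (ae_of_all _ fun x => ENNReal.ofReal_lt_top)]
  have hvpos : (0:ℝ) < (v:ℝ) := by
    have := hv; positivity
  have hb : (0:ℝ) < (2 * (v:ℝ))⁻¹ := by positivity
  have h := integrable_rpow_mul_exp_neg_mul_sq hb (s := ((4:ℕ):ℝ)) (by norm_num)
  simp only [Real.rpow_natCast] at h
  refine (h.const_mul ((Real.sqrt (2 * π * v))⁻¹)).congr (Filter.Eventually.of_forall fun x => ?_)
  rw [gaussianPDF_def]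
  simp only [gaussianPDFReal_def]
  rw [ENNReal.toReal_ofReal (by positivity)]
  rw [sub_zero, show -x^2/(2*(v:ℝ)) = -(2*(v:ℝ))⁻¹ * x^2 by field_simp]
  ring

-- L2: permuting coordinates preserves an iid product measure
lemma measurePreserving_comp_equiv {ι : Type*} [Fintype ι] {γ : Type*} [MeasurableSpace γ]
    (μ0 : Measure γ) [IsProbabilityMeasure μ0] (e : ι ≃ ι) :
    MeasurePreserving (fun z : ι → γ => fun a => z (e a))
      (Measure.pi fun _ => μ0) (Measure.pi fun _ => μ0) := by
  have hmeas : Measurable (fun z : ι → γ => fun a => z (e a)) :=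
    measurable_pi_lambda _ fun a => measurable_pi_apply (e a)
  refine ⟨hmeas, ?_⟩
  refine (Measure.pi_eq fun s hs => ?_).symm
  rw [Measure.map_apply hmeas (MeasurableSet.univ_pi hs)]
  have hpre : (fun z : ι → γ => fun a => z (e a)) ⁻¹' (Set.pi Set.univ s)
      = Set.pi Set.univ (fun b => s (e.symm b)) := by
    ext z
    simp only [Set.mem_preimage, Set.mem_univ_pi]
    exact ⟨fun h b => by simpa using h (e.symm b), fun h a => by simpa using h (e a)⟩
  rw [hpre, Measure.pi_pi]
  exact Equiv.prod_comp e.symm (fun a => μ0 (s a))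

-- gaussian neg invariance
lemma gaussianReal_map_neg (v : ℝ≥0) :
    (gaussianReal 0 v).map (fun x => -x) = gaussianReal 0 v := by
  have h := gaussianReal_map_const_mul (μ := 0) (v := v) (-1)
  rw [show (fun x : ℝ => -x) = ((-1 : ℝ) * ·) by funext x; ring, h]
  have h1 : (⟨(-1:ℝ)^2, sq_nonneg _⟩ : ℝ≥0) = 1 := by ext; norm_num
  rw [show NNReal.mk ((-1:ℝ)^2) (sq_nonneg _) = 1 from h1, one_mul, mul_zero]

-- L3 + L4: integrability of products via 4th moments
lemma abs_mul4_le (a b c d : ℝ) : |a * b * c * d| ≤ a^4 + b^4 + c^4 + d^4 := by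
  have h1 : |a * b * c * d| = |a| * |b| * |c| * |d| := by
    rw [abs_mul, abs_mul, abs_mul]
  rw [h1]
  have ha := abs_nonneg a; have hb := abs_nonneg b
  have hc := abs_nonneg c; have hd := abs_nonneg d
  have h4 : ∀ x : ℝ, x^4 = |x|^4 := fun x => by
    rw [← abs_pow, abs_of_nonneg (by positivity : (0:ℝ) ≤ x^4)]
  rw [h4 a, h4 b, h4 c, h4 d]
  nlinarith [sq_nonneg (|a| * |b| - |c| * |d|), sq_nonneg (|a|^2 - |b|^2),
    sq_nonneg (|c|^2 - |d|^2), mul_nonneg (mul_nonneg ha hb) (mul_nonneg hc hd),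
    mul_nonneg ha hb, mul_nonneg hc hd]

lemma integrable_mul4 {Ω : Type*} [MeasurableSpace Ω] {μ : Measure Ω}
    {a b c d : Ω → ℝ} (hma : Measurable a) (hmb : Measurable b) (hmc : Measurable c)
    (hmd : Measurable d) (ha : Integrable (fun ω => a ω ^ 4) μ)
    (hb : Integrable (fun ω => b ω ^ 4) μ) (hc : Integrable (fun ω => c ω ^ 4) μ)
    (hd : Integrable (fun ω => d ω ^ 4) μ) :
    Integrable (fun ω => a ω * b ω * c ω * d ω) μ := by
  refine Integrable.mono' (((ha.add hb).add hc).add hd)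
    (((hma.mul hmb).mul hmc).mul hmd).aestronglyMeasurable
    (Filter.Eventually.of_forall fun ω => ?_)
  have h := abs_mul4_le (a ω) (b ω) (c ω) (d ω)
  calc ‖a ω * b ω * c ω * d ω‖ = |a ω * b ω * c ω * d ω| := rfl
  _ ≤ a ω ^ 4 + b ω ^ 4 + c ω ^ 4 + d ω ^ 4 := h
section Helpers

variable {d n : ℕ} {Θ : Type} [MeasurableSpace Θ]

/-- The observable map `ω ↦ (x, (f(xᵢ))ᵢ, ε)`. -/
def obs (F : Θ → Vec d → ℝ) (ω : OmegaNL d n Θ) :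
    (Fin (n+1) → Vec d) × (Fin (n+1) → ℝ) × (Fin (n+1) → ℝ) :=
  (ω.1, fun i => F ω.2.1 (ω.1 i), ω.2.2)

lemma measurable_obs {F : Θ → Vec d → ℝ} (hF : Measurable (Function.uncurry F)) :
    Measurable (obs (d := d) (n := n) F) := by
  refine measurable_fst.prodMk (Measurable.prodMk ?_ (measurable_snd.comp measurable_snd))
  exact measurable_pi_lambda _ fun i =>
    hF.comp ((measurable_fst.comp measurable_snd).prodMk
      ((measurable_pi_apply i).comp measurable_fst))

lemma map_obs_invariant (σ : ℝ) (ν : Measure Θ) [IsProbabilityMeasure ν]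
    {F : Θ → Vec d → ℝ} (hF : Measurable (Function.uncurry F))
    (hrot : RotInvariant d ν F)
    (S : Vec d → Vec d) (R : Matrix (Fin d) (Fin d) ℝ) (hR : Rᵀ * R = 1)
    (hSR : ∀ z, S z = R.mulVec z) (hS : Measurable S) (hSS : ∀ z, S (S z) = z)
    (hpres : MeasurePreserving (fun x : Fin (n+1) → Vec d => fun i => S (x i))
      (Measure.pi fun _ => stdGaussian d) (Measure.pi fun _ => stdGaussian d)) :
    Measure.map (fun ω : OmegaNL d n Θ =>
        ((fun i => S (ω.1 i)), (fun i => F ω.2.1 (ω.1 i)), ω.2.2)) (μNL d n σ Θ ν)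
      = Measure.map (obs F) (μNL d n σ Θ ν) := by
  set πε : Measure (Fin (n+1) → ℝ) :=
    Measure.pi fun _ : Fin (n+1) => gaussianReal 0 ⟨σ^2, sq_nonneg σ⟩ with hπε
  set νε : Measure (Θ × (Fin (n+1) → ℝ)) := ν.prod πε with hνε
  set μx : Measure (Fin (n+1) → Vec d) := Measure.pi fun _ => stdGaussian d with hμx
  have hΦ : Measurable (obs (d := d) (n := n) F) := measurable_obs hF
  have hΦ' : Measurable (fun ω : OmegaNL d n Θ =>
      ((fun i => S (ω.1 i)), (fun i => F ω.2.1 (ω.1 i)), ω.2.2)) := by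
    refine Measurable.prodMk ?_ (Measurable.prodMk ?_ (measurable_snd.comp measurable_snd))
    · exact measurable_pi_lambda _ fun i => hS.comp ((measurable_pi_apply i).comp measurable_fst)
    · exact measurable_pi_lambda _ fun i =>
        hF.comp ((measurable_fst.comp measurable_snd).prodMk
          ((measurable_pi_apply i).comp measurable_fst))
  ext s hs
  rw [Measure.map_apply hΦ' hs, Measure.map_apply hΦ hs]
  have hμ : μNL d n σ Θ ν = μx.prod νε := rfl
  rw [hμ, Measure.prod_apply (hΦ' hs), Measure.prod_apply (hΦ hs)]
  -- outer change of variables using hpres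
  have hk' : Measurable fun x : Fin (n+1) → Vec d =>
      νε (Prod.mk x ⁻¹' ((fun ω : OmegaNL d n Θ =>
        ((fun i => S (ω.1 i)), (fun i => F ω.2.1 (ω.1 i)), ω.2.2)) ⁻¹' s)) :=
    measurable_measure_prodMk_left (hΦ' hs)
  rw [← hpres.lintegral_comp hk']
  refine lintegral_congr fun x => ?_
  -- now both sides are νε-measures of sets; simplify using S∘S = id
  have hset1 : (Prod.mk (fun i => S (x i)) ⁻¹' ((fun ω : OmegaNL d n Θ =>
        ((fun i => S (ω.1 i)), (fun i => F ω.2.1 (ω.1 i)), ω.2.2)) ⁻¹' s))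
      = {p : Θ × (Fin (n+1) → ℝ) | (x, fun i => F p.1 (S (x i)), p.2) ∈ s} := by
    ext p
    simp only [Set.mem_preimage, Set.mem_setOf_eq]
    have : (fun i => S (S (x i))) = x := funext fun i => hSS (x i)
    rw [this]
  have hset2 : (Prod.mk x ⁻¹' ((obs (d := d) (n := n) F) ⁻¹' s))
      = {p : Θ × (Fin (n+1) → ℝ) | (x, fun i => F p.1 (x i), p.2) ∈ s} := rfl
  rw [hset1, hset2]
  -- inner Fubini over νε = ν.prod πε
  have ht : MeasurableSet {q : (Fin (n+1) → ℝ) × (Fin (n+1) → ℝ) | (x, q.1, q.2) ∈ s} := by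
    have hm : Measurable fun q : (Fin (n+1) → ℝ) × (Fin (n+1) → ℝ) => (x, q.1, q.2) :=
      measurable_const.prodMk (measurable_fst.prodMk measurable_snd)
    exact hm hs
  have hmeas1 : MeasurableSet {p : Θ × (Fin (n+1) → ℝ) | (x, fun i => F p.1 (S (x i)), p.2) ∈ s} := by
    have hm : Measurable fun p : Θ × (Fin (n+1) → ℝ) => ((x, fun i => F p.1 (S (x i)), p.2) :
        (Fin (n+1) → Vec d) × (Fin (n+1) → ℝ) × (Fin (n+1) → ℝ)) := by
      refine measurable_const.prodMk (Measurable.prodMk ?_ measurable_snd)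
      exact measurable_pi_lambda _ fun i =>
        hF.comp (measurable_fst.prodMk measurable_const)
    exact hm hs
  have hmeas2 : MeasurableSet {p : Θ × (Fin (n+1) → ℝ) | (x, fun i => F p.1 (x i), p.2) ∈ s} := by
    have hm : Measurable fun p : Θ × (Fin (n+1) → ℝ) => ((x, fun i => F p.1 (x i), p.2) :
        (Fin (n+1) → Vec d) × (Fin (n+1) → ℝ) × (Fin (n+1) → ℝ)) := by
      refine measurable_const.prodMk (Measurable.prodMk ?_ measurable_snd)
      exact measurable_pi_lambda _ fun i =>
        hF.comp (measurable_fst.prodMk measurable_const)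
    exact hm hs
  rw [hνε, Measure.prod_apply hmeas1, Measure.prod_apply hmeas2]
  have hh : Measurable fun w : Fin (n+1) → ℝ =>
      πε (Prod.mk w ⁻¹' {q : (Fin (n+1) → ℝ) × (Fin (n+1) → ℝ) | (x, q.1, q.2) ∈ s}) :=
    measurable_measure_prodMk_left ht
  have hw1 : Measurable fun θ : Θ => (fun i => F θ (S (x i)) : Fin (n+1) → ℝ) :=
    measurable_pi_lambda _ fun i => hF.comp (measurable_id.prodMk measurable_const)
  have hw2 : Measurable fun θ : Θ => (fun i => F θ (x i) : Fin (n+1) → ℝ) :=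
    measurable_pi_lambda _ fun i => hF.comp (measurable_id.prodMk measurable_const)
  have e1 : ∀ θ : Θ, Prod.mk θ ⁻¹' {p : Θ × (Fin (n+1) → ℝ) | (x, fun i => F p.1 (S (x i)), p.2) ∈ s}
      = Prod.mk (fun i => F θ (S (x i)) : Fin (n+1) → ℝ) ⁻¹'
        {q : (Fin (n+1) → ℝ) × (Fin (n+1) → ℝ) | (x, q.1, q.2) ∈ s} := fun θ => rfl
  have e2 : ∀ θ : Θ, Prod.mk θ ⁻¹' {p : Θ × (Fin (n+1) → ℝ) | (x, fun i => F p.1 (x i), p.2) ∈ s}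
      = Prod.mk (fun i => F θ (x i) : Fin (n+1) → ℝ) ⁻¹'
        {q : (Fin (n+1) → ℝ) × (Fin (n+1) → ℝ) | (x, q.1, q.2) ∈ s} := fun θ => rfl
  simp only [e1, e2]
  rw [← lintegral_map hh hw1, ← lintegral_map hh hw2]
  congr 1
  have := hrot (n+1) R hR x
  simpa only [← hSR] using this

end Helpers
section Helpers2

variable {d n : ℕ} {Θ : Type} [MeasurableSpace Θ]

lemma integral_obs_invariant (σ : ℝ) (ν : Measure Θ) [IsProbabilityMeasure ν]
    {F : Θ → Vec d → ℝ} (hF : Measurable (Function.uncurry F))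
    (hrot : RotInvariant d ν F)
    (S : Vec d → Vec d) (R : Matrix (Fin d) (Fin d) ℝ) (hR : Rᵀ * R = 1)
    (hSR : ∀ z, S z = R.mulVec z) (hS : Measurable S) (hSS : ∀ z, S (S z) = z)
    (hpres : MeasurePreserving (fun x : Fin (n+1) → Vec d => fun i => S (x i))
      (Measure.pi fun _ => stdGaussian d) (Measure.pi fun _ => stdGaussian d))
    (g : (Fin (n+1) → Vec d) × (Fin (n+1) → ℝ) × (Fin (n+1) → ℝ) → ℝ) (hg : Measurable g) :
    ∫ ω, g ((fun i => S (ω.1 i)), (fun i => F ω.2.1 (ω.1 i)), ω.2.2) ∂(μNL d n σ Θ ν)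
      = ∫ ω, g (obs F ω) ∂(μNL d n σ Θ ν) := by
  have hΦ : Measurable (obs (d := d) (n := n) F) := measurable_obs hF
  have hΦ' : Measurable (fun ω : OmegaNL d n Θ =>
      ((fun i => S (ω.1 i)), (fun i => F ω.2.1 (ω.1 i)), ω.2.2)) := by
    refine Measurable.prodMk ?_ (Measurable.prodMk ?_ (measurable_snd.comp measurable_snd))
    · exact measurable_pi_lambda _ fun i => hS.comp ((measurable_pi_apply i).comp measurable_fst)
    · exact measurable_pi_lambda _ fun i =>
        hF.comp ((measurable_fst.comp measurable_snd).prodMk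
          ((measurable_pi_apply i).comp measurable_fst))
  rw [← integral_map hΦ'.aemeasurable hg.aestronglyMeasurable,
    ← integral_map hΦ.aemeasurable hg.aestronglyMeasurable,
    map_obs_invariant σ ν hF hrot S R hR hSR hS hSS hpres]

/-- Reflection of coordinate `i`. -/
def reflCoord (i : Fin d) (z : Vec d) : Vec d := fun a => if a = i then -(z a) else z a

lemma reflCoord_eq_mulVec (i : Fin d) (z : Vec d) :
    reflCoord i z = (Matrix.diagonal (fun a => if a = i then (-1:ℝ) else 1)).mulVec z := by
  funext a
  rw [Matrix.mulVec_diagonal]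
  by_cases h : a = i <;> simp [reflCoord, h]

lemma reflCoord_orth (i : Fin d) :
    (Matrix.diagonal (fun a => if a = i then (-1:ℝ) else 1))ᵀ
      * Matrix.diagonal (fun a => if a = i then (-1:ℝ) else 1) = 1 := by
  rw [Matrix.diagonal_transpose, Matrix.diagonal_mul_diagonal]
  have : (fun a : Fin d => (if a = i then (-1:ℝ) else 1) * (if a = i then (-1:ℝ) else 1))
      = fun _ => 1 := by
    funext a; by_cases h : a = i <;> simp [h]
  rw [this, Matrix.diagonal_one]

lemma measurable_reflCoord (i : Fin d) : Measurable (reflCoord i) := by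
  refine measurable_pi_lambda _ fun a => ?_
  unfold reflCoord
  by_cases h : a = i
  · simp only [h, if_true]
    exact (measurable_pi_apply (i : Fin d) : Measurable fun z : Vec d => z i).neg
  · simp only [h, if_false]
    exact measurable_pi_apply a

lemma reflCoord_invol (i : Fin d) (z : Vec d) : reflCoord i (reflCoord i z) = z := by
  funext a; by_cases h : a = i <;> simp [reflCoord, h]

lemma reflCoord_measurePreserving (i : Fin d) :
    MeasurePreserving (reflCoord i) (stdGaussian d) (stdGaussian d) := by
  have : ∀ a : Fin d, MeasurePreserving (fun t : ℝ => if a = i then -t else t)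
      (gaussianReal 0 1) (gaussianReal 0 1) := by
    intro a
    by_cases h : a = i
    · simp only [h, if_true]
      exact ⟨measurable_neg, gaussianReal_map_neg 1⟩
    · simp only [h, if_false]
      exact MeasurePreserving.id _
  have hp := measurePreserving_pi (fun _ : Fin d => gaussianReal 0 1)
    (fun _ : Fin d => gaussianReal 0 1) this
  have : (fun (z : Vec d) (a : Fin d) => if a = i then -(z a) else z a) = reflCoord i := rfl
  rwa [this] at hp

/-- Coordinate swap. -/
def swapCoord (i j : Fin d) (z : Vec d) : Vec d := fun a => z (Equiv.swap i j a)

lemma swapCoord_eq_mulVec (i j : Fin d) (z : Vec d) :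
    swapCoord i j z
      = (Matrix.of fun a b : Fin d => if b = Equiv.swap i j a then (1:ℝ) else 0).mulVec z := by
  funext a
  simp only [Matrix.mulVec, dotProduct, Matrix.of_apply, ite_mul, one_mul, zero_mul]
  rw [Finset.sum_ite_eq' Finset.univ (Equiv.swap i j a) z]
  simp [swapCoord]

lemma swapCoord_orth (i j : Fin d) :
    (Matrix.of fun a b : Fin d => if b = Equiv.swap i j a then (1:ℝ) else 0)ᵀ
      * (Matrix.of fun a b : Fin d => if b = Equiv.swap i j a then (1:ℝ) else 0) = 1 := by
  ext a b
  simp only [Matrix.mul_apply, Matrix.transpose_apply, Matrix.of_apply, Matrix.one_apply]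
  rw [Finset.sum_eq_single (Equiv.swap i j a)]
  · simp only [Equiv.swap_apply_self, if_true]
    by_cases h : a = b
    · subst h; simp
    · have : ¬ (b = a) := fun hh => h hh.symm
      simp [Equiv.swap_apply_self, this, h]
  · intro c _ hc
    have : ¬ (a = Equiv.swap i j c) := by
      intro hac
      apply hc
      rw [hac, Equiv.swap_apply_self]
    simp [this]
  · simp

lemma measurable_swapCoord (i j : Fin d) : Measurable (swapCoord i j) :=
  measurable_pi_lambda _ fun a => measurable_pi_apply _

lemma swapCoord_invol (i j : Fin d) (z : Vec d) : swapCoord i j (swapCoord i j z) = z := by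
  funext a; simp [swapCoord, Equiv.swap_apply_self]

lemma swapCoord_measurePreserving (i j : Fin d) :
    MeasurePreserving (swapCoord i j) (stdGaussian d) (stdGaussian d) :=
  measurePreserving_comp_equiv (gaussianReal 0 1) (Equiv.swap i j)

end Helpers2
section Helpers3

variable {d n : ℕ} {Θ : Type} [MeasurableSpace Θ]
variable (σ : ℝ) (ν : Measure Θ) [IsProbabilityMeasure ν]

instance : IsProbabilityMeasure (μNL d n σ Θ ν) := by
  unfold μNL; infer_instance

lemma integrable_x4 (k : Fin (n+1)) (i : Fin d) :
    Integrable (fun ω : OmegaNL d n Θ => (ω.1 k i)^4) (μNL d n σ Θ ν) := by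
  have h1 : Measure.map Prod.fst (μNL d n σ Θ ν)
      = (Measure.pi fun _ : Fin (n+1) => stdGaussian d) := by
    unfold μNL
    rw [Measure.map_fst_prod]
    simp
  have h2 : Measure.map (fun ω : OmegaNL d n Θ => ω.1 k) (μNL d n σ Θ ν) = stdGaussian d := by
    have : (fun ω : OmegaNL d n Θ => ω.1 k) = (fun x : Fin (n+1) → Vec d => x k) ∘ Prod.fst :=
      rfl
    rw [this, ← Measure.map_map (measurable_pi_apply k) measurable_fst, h1,
      pi_map_eval _ k]
  have h3 : Measure.map (fun ω : OmegaNL d n Θ => ω.1 k i) (μNL d n σ Θ ν)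
      = gaussianReal 0 1 := by
    have : (fun ω : OmegaNL d n Θ => ω.1 k i) = (fun v : Vec d => v i) ∘ (fun ω => ω.1 k) :=
      rfl
    rw [this, ← Measure.map_map (measurable_pi_apply i)
      ((measurable_pi_apply k).comp measurable_fst), h2]
    exact pi_map_eval _ i
  have h4 := integrable_pow4_gaussianReal 1
  rw [← h3] at h4
  exact (integrable_map_measure (f := fun ω : OmegaNL d n Θ => ω.1 k i) (g := fun x : ℝ => x ^ 4) ((measurable_id.pow_const 4).aestronglyMeasurable)
    (((measurable_pi_apply i).comp ((measurable_pi_apply k).comp measurable_fst)).aemeasurable)).mp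
    h4

lemma integrable_eps4 (k : Fin (n+1)) :
    Integrable (fun ω : OmegaNL d n Θ => (ω.2.2 k)^4) (μNL d n σ Θ ν) := by
  have h1 : Measure.map (Prod.snd ∘ Prod.snd) (μNL d n σ Θ ν)
      = (Measure.pi fun _ : Fin (n+1) => gaussianReal 0 ⟨σ^2, sq_nonneg σ⟩) := by
    unfold μNL
    rw [← Measure.map_map measurable_snd measurable_snd, Measure.map_snd_prod]
    simp only [measure_univ, one_smul]
    rw [Measure.map_snd_prod]
    simp
  have h3 : Measure.map (fun ω : OmegaNL d n Θ => ω.2.2 k) (μNL d n σ Θ ν)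
      = gaussianReal 0 ⟨σ^2, sq_nonneg σ⟩ := by
    have heq : (fun ω : OmegaNL d n Θ => ω.2.2 k)
        = (fun e : Fin (n+1) → ℝ => e k) ∘ (Prod.snd ∘ Prod.snd) := rfl
    rw [heq, ← Measure.map_map (measurable_pi_apply k)
      (measurable_snd.comp measurable_snd), h1]
    exact pi_map_eval _ k
  have h4 := integrable_pow4_gaussianReal ⟨σ^2, sq_nonneg σ⟩
  rw [← h3] at h4
  exact (integrable_map_measure (f := fun ω : OmegaNL d n Θ => ω.2.2 k) (g := fun x : ℝ => x ^ 4) ((measurable_id.pow_const 4).aestronglyMeasurable)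
    (((measurable_pi_apply k).comp (measurable_snd.comp measurable_snd)).aemeasurable)).mp h4

lemma integrable_F4 {F : Θ → Vec d → ℝ} (hmom : MomentsFinite d n σ Θ ν F) (k : Fin (n+1)) :
    Integrable (fun ω : OmegaNL d n Θ => (F ω.2.1 (ω.1 k))^4) (μNL d n σ Θ ν) := by
  have h := hmom (fun i => if i = k then 4 else 0) (by simp)
  refine h.congr (Filter.Eventually.of_forall fun ω => ?_)
  show (∏ i : Fin (n+1), F ω.2.1 (ω.1 i) ^ (if i = k then 4 else 0)) = F ω.2.1 (ω.1 k) ^ 4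
  rw [Finset.prod_eq_single k]
  · simp
  · intro b _ hb; simp [hb]
  · simp

end Helpers3
section Helpers4

variable {d n : ℕ} {Θ : Type} [MeasurableSpace Θ]

lemma XtY_apply (F : Θ → Vec d → ℝ) (ω : OmegaNL d n Θ) (i : Fin d) :
    XtY F ω i = ∑ k : Fin n,
      ω.1 k.castSucc i * (F ω.2.1 (ω.1 k.castSucc) + ω.2.2 k.castSucc) := by
  simp [XtY, Xmat, Yvec, yv, xv, Matrix.mulVec, dotProduct, Matrix.transpose_apply]

variable (σ : ℝ) (ν : Measure Θ) [IsProbabilityMeasure ν]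

lemma measurable_XtY {F : Θ → Vec d → ℝ} (hF : Measurable (Function.uncurry F)) (i : Fin d) :
    Measurable (fun ω : OmegaNL d n Θ => XtY F ω i) := by
  have : (fun ω : OmegaNL d n Θ => XtY F ω i) = fun ω => ∑ k : Fin n,
      ω.1 k.castSucc i * (F ω.2.1 (ω.1 k.castSucc) + ω.2.2 k.castSucc) := by
    funext ω; exact XtY_apply F ω i
  rw [this]
  refine Finset.measurable_sum _ fun k _ => Measurable.mul ?_ (Measurable.add ?_ ?_)
  · exact (measurable_pi_apply i).comp ((measurable_pi_apply k.castSucc).comp measurable_fst)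
  · exact hF.comp ((measurable_fst.comp measurable_snd).prodMk
      ((measurable_pi_apply k.castSucc).comp measurable_fst))
  · exact (measurable_pi_apply k.castSucc).comp (measurable_snd.comp measurable_snd)

lemma integrable_term {F : Θ → Vec d → ℝ} (hF : Measurable (Function.uncurry F))
    (hmom : MomentsFinite d n σ Θ ν F) (k l : Fin (n+1)) (i j : Fin d) :
    Integrable (fun ω : OmegaNL d n Θ =>
      ω.1 k i * (F ω.2.1 (ω.1 k) + ω.2.2 k) * ((F ω.2.1 (ω.1 l) + ω.2.2 l) * ω.1 l j))
      (μNL d n σ Θ ν) := by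
  have hxm : ∀ (k : Fin (n+1)) (i : Fin d), Measurable fun ω : OmegaNL d n Θ => ω.1 k i :=
    fun k i => (measurable_pi_apply i).comp ((measurable_pi_apply k).comp measurable_fst)
  have hvm : ∀ k : Fin (n+1), Measurable fun ω : OmegaNL d n Θ => F ω.2.1 (ω.1 k) :=
    fun k => hF.comp ((measurable_fst.comp measurable_snd).prodMk
      ((measurable_pi_apply k).comp measurable_fst))
  have hem : ∀ k : Fin (n+1), Measurable fun ω : OmegaNL d n Θ => ω.2.2 k :=
    fun k => (measurable_pi_apply k).comp (measurable_snd.comp measurable_snd)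
  have t1 := integrable_mul4 (hxm k i) (hvm k) (hvm l) (hxm l j)
    (integrable_x4 σ ν k i) (integrable_F4 σ ν hmom k) (integrable_F4 σ ν hmom l)
    (integrable_x4 σ ν l j)
  have t2 := integrable_mul4 (hxm k i) (hvm k) (hem l) (hxm l j)
    (integrable_x4 σ ν k i) (integrable_F4 σ ν hmom k) (integrable_eps4 σ ν l)
    (integrable_x4 σ ν l j)
  have t3 := integrable_mul4 (hxm k i) (hem k) (hvm l) (hxm l j)
    (integrable_x4 σ ν k i) (integrable_eps4 σ ν k) (integrable_F4 σ ν hmom l)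
    (integrable_x4 σ ν l j)
  have t4 := integrable_mul4 (hxm k i) (hem k) (hem l) (hxm l j)
    (integrable_x4 σ ν k i) (integrable_eps4 σ ν k) (integrable_eps4 σ ν l)
    (integrable_x4 σ ν l j)
  refine (((t1.add t2).add t3).add t4).congr (Filter.Eventually.of_forall fun ω => ?_)
  simp only [Pi.add_apply]
  ring

lemma integrable_yx {F : Θ → Vec d → ℝ} (hF : Measurable (Function.uncurry F))
    (hmom : MomentsFinite d n σ Θ ν F) (l : Fin (n+1)) (j : Fin d) :
    Integrable (fun ω : OmegaNL d n Θ => (F ω.2.1 (ω.1 l) + ω.2.2 l) * ω.1 l j)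
      (μNL d n σ Θ ν) := by
  have hxm : Measurable fun ω : OmegaNL d n Θ => ω.1 l j :=
    (measurable_pi_apply j).comp ((measurable_pi_apply l).comp measurable_fst)
  have hvm : Measurable fun ω : OmegaNL d n Θ => F ω.2.1 (ω.1 l) :=
    hF.comp ((measurable_fst.comp measurable_snd).prodMk
      ((measurable_pi_apply l).comp measurable_fst))
  have hem : Measurable fun ω : OmegaNL d n Θ => ω.2.2 l :=
    (measurable_pi_apply l).comp (measurable_snd.comp measurable_snd)
  have hone : Integrable (fun _ : OmegaNL d n Θ => (1:ℝ)^4) (μNL d n σ Θ ν) := by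
    simpa using (integrable_const (1:ℝ) : Integrable _ (μNL d n σ Θ ν))
  have t1 := integrable_mul4 hvm hxm measurable_const measurable_const
    (integrable_F4 σ ν hmom l) (integrable_x4 σ ν l j) hone hone
  have t2 := integrable_mul4 hem hxm measurable_const measurable_const
    (integrable_eps4 σ ν l) (integrable_x4 σ ν l j) hone hone
  refine (t1.add t2).congr (Filter.Eventually.of_forall fun ω => ?_)
  simp only [Pi.add_apply]
  ring

lemma integrable_XtY_mul_yx {F : Θ → Vec d → ℝ} (hF : Measurable (Function.uncurry F))
    (hmom : MomentsFinite d n σ Θ ν F) (l : Fin (n+1)) (i j : Fin d) :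
    Integrable (fun ω : OmegaNL d n Θ =>
      XtY F ω i * ((F ω.2.1 (ω.1 l) + ω.2.2 l) * ω.1 l j)) (μNL d n σ Θ ν) := by
  have h := integrable_finset_sum (μ := μNL d n σ Θ ν) Finset.univ
    (fun (k : Fin n) (_ : k ∈ Finset.univ) => integrable_term σ ν hF hmom k.castSucc l i j)
  refine h.congr (Filter.Eventually.of_forall fun ω => ?_)
  show (∑ k : Fin n, ω.1 k.castSucc i * (F ω.2.1 (ω.1 k.castSucc) + ω.2.2 k.castSucc) *
      ((F ω.2.1 (ω.1 l) + ω.2.2 l) * ω.1 l j))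
    = XtY F ω i * ((F ω.2.1 (ω.1 l) + ω.2.2 l) * ω.1 l j)
  rw [XtY_apply F ω i, Finset.sum_mul]

/-- Reduction of `∫ XtY i * ubar j` via conditional expectation. -/
lemma integral_XtY_ubar {F : Θ → Vec d → ℝ} (hF : Measurable (Function.uncurry F))
    (hmom : MomentsFinite d n σ Θ ν F) (i j : Fin d) :
    ∫ ω, XtY F ω i * ubar d n σ Θ ν F ω j ∂(μNL d n σ Θ ν)
      = ∫ ω, XtY F ω i *
          ((F ω.2.1 (ω.1 (Fin.last n)) + ω.2.2 (Fin.last n)) * ω.1 (Fin.last n) j)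
          ∂(μNL d n σ Θ ν) := by
  set μ := μNL d n σ Θ ν with hμ
  set pc : OmegaNL d n Θ → (Fin n → Vec d) × (Fin n → ℝ) :=
    fun ω => (fun i : Fin n => xv i.castSucc ω, fun i : Fin n => yv F i.castSucc ω) with hpcdef
  have hπ : Measurable pc := by
    refine Measurable.prodMk ?_ ?_
    · exact measurable_pi_lambda _ fun k =>
        (measurable_pi_apply k.castSucc).comp measurable_fst
    · refine measurable_pi_lambda _ fun k => Measurable.add ?_ ?_
      · exact hF.comp ((measurable_fst.comp measurable_snd).prodMk
          ((measurable_pi_apply k.castSucc).comp measurable_fst))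
      · exact (measurable_pi_apply k.castSucc).comp (measurable_snd.comp measurable_snd)
  have hm : ctxAlg d n Θ F ≤ (inferInstance : MeasurableSpace (OmegaNL d n Θ)) := by
    unfold ctxAlg
    exact measurable_iff_comap_le.mp hπ
  have hπm : Measurable[ctxAlg d n Θ F] pc := fun s hs => ⟨s, hs, rfl⟩
  set f : OmegaNL d n Θ → ℝ := fun ω => XtY F ω i with hfdef
  set g : OmegaNL d n Θ → ℝ :=
    fun ω => (F ω.2.1 (ω.1 (Fin.last n)) + ω.2.2 (Fin.last n)) * ω.1 (Fin.last n) j with hgdef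
  have hfsm : StronglyMeasurable[ctxAlg d n Θ F] f := by
    have hH : Measurable fun p : (Fin n → Vec d) × (Fin n → ℝ) => ∑ k : Fin n, p.1 k i * p.2 k :=
      Finset.measurable_sum _ fun k _ =>
        Measurable.mul (f := fun p : (Fin n → Vec d) × (Fin n → ℝ) => p.1 k i)
          (g := fun p : (Fin n → Vec d) × (Fin n → ℝ) => p.2 k)
          ((measurable_pi_apply i).comp ((measurable_pi_apply k).comp measurable_fst))
          ((measurable_pi_apply k).comp measurable_snd)
    have hfc : f = (fun p : (Fin n → Vec d) × (Fin n → ℝ) => ∑ k : Fin n, p.1 k i * p.2 k) ∘ pc := by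
      funext ω
      rw [hfdef]
      simp only [Function.comp_apply, hpcdef]
      rw [XtY_apply]
      rfl
    rw [hfc]
    exact (hH.comp hπm).stronglyMeasurable
  have hg : Integrable g μ := integrable_yx σ ν hF hmom (Fin.last n) j
  have hfg : Integrable (f * g) μ := by
    have := integrable_XtY_mul_yx σ ν hF hmom (Fin.last n) i j
    exact this.congr (Filter.Eventually.of_forall fun ω => rfl)
  have hpull := condExp_mul_of_stronglyMeasurable_left hfsm hfg hg
  calc ∫ ω, XtY F ω i * ubar d n σ Θ ν F ω j ∂μ
      = ∫ ω, (f * μ[g|ctxAlg d n Θ F]) ω ∂μ := by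
        refine integral_congr_ae (Filter.Eventually.of_forall fun ω => ?_)
        rfl
    _ = ∫ ω, (μ[f * g|ctxAlg d n Θ F]) ω ∂μ := (integral_congr_ae hpull).symm
    _ = ∫ ω, (f * g) ω ∂μ := integral_condExp hm
    _ = ∫ ω, XtY F ω i *
          ((F ω.2.1 (ω.1 (Fin.last n)) + ω.2.2 (Fin.last n)) * ω.1 (Fin.last n) j) ∂μ := rfl

end Helpers4
section FinalHelpers

variable {d n : ℕ} {Θ : Type} [MeasurableSpace Θ]

/-- The "first factor" `(Xᵀy)ᵢ` as a function of the observables. -/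
def Afun (i : Fin d) (q : (Fin (n+1) → Vec d) × (Fin (n+1) → ℝ) × (Fin (n+1) → ℝ)) : ℝ :=
  ∑ k : Fin n, q.1 k.castSucc i * (q.2.1 k.castSucc + q.2.2 k.castSucc)

lemma measurable_Afun (i : Fin d) : Measurable (Afun (d := d) (n := n) i) := by
  refine Finset.measurable_sum _ fun k _ => Measurable.mul ?_ (Measurable.add ?_ ?_)
  · exact (measurable_pi_apply i).comp ((measurable_pi_apply k.castSucc).comp measurable_fst)
  · exact (measurable_pi_apply k.castSucc).comp (measurable_fst.comp measurable_snd)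
  · exact (measurable_pi_apply k.castSucc).comp (measurable_snd.comp measurable_snd)

lemma Afun_obs (F : Θ → Vec d → ℝ) (i : Fin d) (ω : OmegaNL d n Θ) :
    Afun i (obs F ω) = XtY F ω i := by
  rw [XtY_apply]
  rfl

lemma Afun_refl (i j : Fin d) (hij : j ≠ i)
    (x : Fin (n+1) → Vec d) (v e : Fin (n+1) → ℝ) :
    Afun j ((fun k => reflCoord i (x k)), v, e) = Afun j (x, v, e) := by
  unfold Afun
  refine Finset.sum_congr rfl fun k _ => ?_
  simp [reflCoord, hij]

lemma Afun_refl_self (i : Fin d) (x : Fin (n+1) → Vec d) (v e : Fin (n+1) → ℝ) :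
    Afun i ((fun k => reflCoord i (x k)), v, e) = -Afun i (x, v, e) := by
  unfold Afun
  rw [← Finset.sum_neg_distrib]
  refine Finset.sum_congr rfl fun k _ => ?_
  simp only [reflCoord, if_pos rfl, if_true]
  ring

lemma Afun_swap (i i0 : Fin d) (x : Fin (n+1) → Vec d) (v e : Fin (n+1) → ℝ) :
    Afun i ((fun k => swapCoord i i0 (x k)), v, e) = Afun i0 (x, v, e) := by
  unfold Afun
  refine Finset.sum_congr rfl fun k _ => ?_
  simp [swapCoord, Equiv.swap_apply_left]

end FinalHelpers

/-- **Lemma 5.3 (scalar multiples of the identity, nonlinear targets).**  In the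
nonlinear-target setting there are scalars `c₁, c₂` with `E[Xᵀ y⃗ y⃗ᵀ X] = c₁ I_d` and
`E[Xᵀ y⃗ ūᵀ] = c₂ I_d`. -/
theorem nonlinear_scalar_multiples (d n : ℕ) (hd : 1 ≤ d) (hn : 1 ≤ n)
    (σ : ℝ) (hσ : 0 < σ)
    (Θ : Type) [MeasurableSpace Θ] (ν : Measure Θ) [IsProbabilityMeasure ν]
    (F : Θ → Vec d → ℝ) (hF : Measurable (Function.uncurry F))
    (hrot : RotInvariant d ν F) (hsign : SignSymmetric d ν F)
    (hmom : MomentsFinite d n σ Θ ν F) :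
    (∃ c₁ : ℝ,
      (Matrix.of fun i j : Fin d => ∫ ω, XtY F ω i * XtY F ω j ∂ (μNL d n σ Θ ν))
        = c₁ • (1 : Matrix (Fin d) (Fin d) ℝ)) ∧
    (∃ c₂ : ℝ,
      (Matrix.of fun i j : Fin d =>
          ∫ ω, XtY F ω i * ubar d n σ Θ ν F ω j ∂ (μNL d n σ Θ ν))
        = c₂ • (1 : Matrix (Fin d) (Fin d) ℝ)) := by
  classical
  set μ := μNL d n σ Θ ν with hμdef
  set i0 : Fin d := ⟨0, hd⟩ with hi0
  have hrefl_pres : ∀ i : Fin d,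
      MeasurePreserving (fun x : Fin (n+1) → Vec d => fun k => reflCoord i (x k))
        (Measure.pi fun _ => stdGaussian d) (Measure.pi fun _ => stdGaussian d) :=
    fun i => measurePreserving_pi _ _ (fun _ => reflCoord_measurePreserving i)
  have hswap_pres : ∀ i : Fin d,
      MeasurePreserving (fun x : Fin (n+1) → Vec d => fun k => swapCoord i i0 (x k))
        (Measure.pi fun _ => stdGaussian d) (Measure.pi fun _ => stdGaussian d) :=
    fun i => measurePreserving_pi _ _ (fun _ => swapCoord_measurePreserving i i0)
  constructor
  · -- first matrix
    have entry_eq : ∀ i j : Fin d, ∫ ω, XtY F ω i * XtY F ω j ∂μ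
        = ∫ ω, Afun i (obs F ω) * Afun j (obs F ω) ∂μ := by
      intro i j
      refine integral_congr_ae (Filter.Eventually.of_forall fun ω => ?_)
      show XtY F ω i * XtY F ω j = Afun i (obs F ω) * Afun j (obs F ω)
      rw [Afun_obs, Afun_obs]
    have hoff : ∀ i j : Fin d, i ≠ j → ∫ ω, XtY F ω i * XtY F ω j ∂μ = 0 := by
      intro i j hij
      have hinv := integral_obs_invariant σ ν hF hrot (reflCoord i) _
        (reflCoord_orth i) (reflCoord_eq_mulVec i) (measurable_reflCoord i)
        (reflCoord_invol i) (hrefl_pres i)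
        (fun q => Afun i q * Afun j q) ((measurable_Afun i).mul (measurable_Afun j))
      have hneg : ∫ ω, (fun q => Afun i q * Afun j q)
            ((fun k => reflCoord i (ω.1 k)), (fun k => F ω.2.1 (ω.1 k)), ω.2.2) ∂μ
          = ∫ ω, -(Afun i (obs F ω) * Afun j (obs F ω)) ∂μ := by
        refine integral_congr_ae (Filter.Eventually.of_forall fun ω => ?_)
        simp only [obs]
        rw [Afun_refl_self, Afun_refl i j (Ne.symm hij)]
        ring
      rw [hneg, integral_neg] at hinv
      rw [entry_eq i j]
      linarith [hinv]
    have hdiag : ∀ i : Fin d, ∫ ω, XtY F ω i * XtY F ω i ∂μ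
        = ∫ ω, XtY F ω i0 * XtY F ω i0 ∂μ := by
      intro i
      have hinv := integral_obs_invariant σ ν hF hrot (swapCoord i i0) _
        (swapCoord_orth i i0) (swapCoord_eq_mulVec i i0) (measurable_swapCoord i i0)
        (swapCoord_invol i i0) (hswap_pres i)
        (fun q => Afun i q * Afun i q) ((measurable_Afun i).mul (measurable_Afun i))
      have hsw : ∫ ω, (fun q => Afun i q * Afun i q)
            ((fun k => swapCoord i i0 (ω.1 k)), (fun k => F ω.2.1 (ω.1 k)), ω.2.2) ∂μ
          = ∫ ω, Afun i0 (obs F ω) * Afun i0 (obs F ω) ∂μ := by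
        refine integral_congr_ae (Filter.Eventually.of_forall fun ω => ?_)
        simp only [obs]
        rw [Afun_swap]
      rw [hsw] at hinv
      rw [entry_eq i i, entry_eq i0 i0, ← hinv]
    refine ⟨∫ ω, XtY F ω i0 * XtY F ω i0 ∂μ, ?_⟩
    ext i j
    simp only [Matrix.of_apply, Matrix.smul_apply, Matrix.one_apply, smul_eq_mul]
    by_cases h : i = j
    · subst h
      rw [if_pos rfl, mul_one, hdiag i]
    · rw [if_neg h, mul_zero, hoff i j h]
  · -- second matrix
    have hred : ∀ i j : Fin d, ∫ ω, XtY F ω i * ubar d n σ Θ ν F ω j ∂μ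
        = ∫ ω, Afun i (obs F ω) *
            (((obs F ω).2.1 (Fin.last n) + (obs F ω).2.2 (Fin.last n))
              * (obs F ω).1 (Fin.last n) j) ∂μ := by
      intro i j
      rw [integral_XtY_ubar σ ν hF hmom i j]
      refine integral_congr_ae (Filter.Eventually.of_forall fun ω => ?_)
      show XtY F ω i * ((F ω.2.1 (ω.1 (Fin.last n)) + ω.2.2 (Fin.last n)) * ω.1 (Fin.last n) j)
        = Afun i (obs F ω) * (((obs F ω).2.1 (Fin.last n) + (obs F ω).2.2 (Fin.last n))
            * (obs F ω).1 (Fin.last n) j)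
      rw [Afun_obs]
      rfl
    have hoff : ∀ i j : Fin d, i ≠ j →
        ∫ ω, XtY F ω i * ubar d n σ Θ ν F ω j ∂μ = 0 := by
      intro i j hij
      set g2 : (Fin (n+1) → Vec d) × (Fin (n+1) → ℝ) × (Fin (n+1) → ℝ) → ℝ :=
        fun q => Afun i q * ((q.2.1 (Fin.last n) + q.2.2 (Fin.last n)) * q.1 (Fin.last n) j)
        with hg2def
      have hg2m : Measurable g2 := by
        refine (measurable_Afun i).mul (Measurable.mul (Measurable.add ?_ ?_) ?_)
        · exact (measurable_pi_apply (Fin.last n)).comp (measurable_fst.comp measurable_snd)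
        · exact (measurable_pi_apply (Fin.last n)).comp (measurable_snd.comp measurable_snd)
        · exact (measurable_pi_apply j).comp
            ((measurable_pi_apply (Fin.last n)).comp measurable_fst)
      have hinv := integral_obs_invariant σ ν hF hrot (reflCoord i) _
        (reflCoord_orth i) (reflCoord_eq_mulVec i) (measurable_reflCoord i)
        (reflCoord_invol i) (hrefl_pres i) g2 hg2m
      have hneg : ∫ ω, g2 ((fun k => reflCoord i (ω.1 k)),
            (fun k => F ω.2.1 (ω.1 k)), ω.2.2) ∂μ = ∫ ω, -(g2 (obs F ω)) ∂μ := by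
        refine integral_congr_ae (Filter.Eventually.of_forall fun ω => ?_)
        simp only [hg2def, obs]
        have hrc : reflCoord i (ω.1 (Fin.last n)) j = ω.1 (Fin.last n) j := by
          simp [reflCoord, Ne.symm hij]
        rw [Afun_refl_self, hrc]
        ring
      rw [hneg, integral_neg] at hinv
      rw [hred i j]
      have : ∫ ω, Afun i (obs F ω) * (((obs F ω).2.1 (Fin.last n)
            + (obs F ω).2.2 (Fin.last n)) * (obs F ω).1 (Fin.last n) j) ∂μ
          = ∫ ω, g2 (obs F ω) ∂μ := rfl
      rw [this]
      linarith [hinv]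
    have hdiag : ∀ i : Fin d, ∫ ω, XtY F ω i * ubar d n σ Θ ν F ω i ∂μ
        = ∫ ω, XtY F ω i0 * ubar d n σ Θ ν F ω i0 ∂μ := by
      intro i
      set g2 : (Fin (n+1) → Vec d) × (Fin (n+1) → ℝ) × (Fin (n+1) → ℝ) → ℝ :=
        fun q => Afun i q * ((q.2.1 (Fin.last n) + q.2.2 (Fin.last n)) * q.1 (Fin.last n) i)
        with hg2def
      have hg2m : Measurable g2 := by
        refine (measurable_Afun i).mul (Measurable.mul (Measurable.add ?_ ?_) ?_)
        · exact (measurable_pi_apply (Fin.last n)).comp (measurable_fst.comp measurable_snd)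
        · exact (measurable_pi_apply (Fin.last n)).comp (measurable_snd.comp measurable_snd)
        · exact (measurable_pi_apply i).comp
            ((measurable_pi_apply (Fin.last n)).comp measurable_fst)
      have hinv := integral_obs_invariant σ ν hF hrot (swapCoord i i0) _
        (swapCoord_orth i i0) (swapCoord_eq_mulVec i i0) (measurable_swapCoord i i0)
        (swapCoord_invol i i0) (hswap_pres i) g2 hg2m
      have hsw : ∫ ω, g2 ((fun k => swapCoord i i0 (ω.1 k)),
            (fun k => F ω.2.1 (ω.1 k)), ω.2.2) ∂μ
          = ∫ ω, Afun i0 (obs F ω) * (((obs F ω).2.1 (Fin.last n)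
              + (obs F ω).2.2 (Fin.last n)) * (obs F ω).1 (Fin.last n) i0) ∂μ := by
        refine integral_congr_ae (Filter.Eventually.of_forall fun ω => ?_)
        simp only [hg2def, obs]
        have hsc : swapCoord i i0 (ω.1 (Fin.last n)) i = ω.1 (Fin.last n) i0 := by
          simp [swapCoord, Equiv.swap_apply_left]
        rw [Afun_swap, hsc]
      rw [hsw] at hinv
      rw [hred i i, hred i0 i0, ← hinv]
    refine ⟨∫ ω, XtY F ω i0 * ubar d n σ Θ ν F ω i0 ∂μ, ?_⟩
    ext i j
    simp only [Matrix.of_apply, Matrix.smul_apply, Matrix.one_apply, smul_eq_mul]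
    by_cases h : i = j
    · subst h
      rw [if_pos rfl, mul_one, hdiag i]
    · rw [if_neg h, mul_zero, hoff i j h]
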